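/- Let O ⊆ ℝ^d be an open set whose boundary ∂O is porous. Then there exists t ∈ (0,1) such that O is of class D^t, i.e. sup over x ∈ ∂O and 0 < r ≤ 1 of r^{t−d} · ∫_{B(x,r) \ ∂O} dist(y, ∂O)^{−t} dy is finite. -/

import Mathlib

/-!
If `E` is `κ`-porous, every point within `κρ/2` of `E` sees, at distance `< 3ρ`, a ball of
radius `κρ/2` inside the `2ρ`-neighbourhood of `E` but outside its `κρ/2`-neighbourhood. Double
counting pairs of points at distance `< 3ρ` (Tonelli) turns this into a volume gain: in a ball,
the `κρ/2`-neighbourhood of `E` has at most the fraction `β = (1 + (κ/6)^d)⁻¹ < 1` of the measure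
of the `2ρ`-neighbourhood. Iterating, `{dist(·, E) < (κ/4)^k r} ∩ B(x, r)` has measure
`≲ β^k r^d`, and summing `dist(·, E)^(-t)` over these layers gives a geometric series of ratio
`β (κ/4)^(-t)`, which is `< 1` for small `t > 0`.
-/

open MeasureTheory Metric Filter Topology Set Module
open scoped ENNReal

theorem Real.exists_mul_rpow_neg_lt_one {β θ : ℝ} (hβ : β < 1) (hθ : θ ≠ 0) :
    ∃ t : ℝ, β * θ ^ (-t) < 1 ∧ 0 < t ∧ t < 1 := by
  have hcont : ContinuousAt (fun t : ℝ => β * θ ^ (-t)) 0 :=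
    continuousAt_const.mul ((Real.continuousAt_const_rpow hθ).comp continuousAt_neg)
  have hsmall : ∀ᶠ t in 𝓝 (0 : ℝ), β * θ ^ (-t) < 1 :=
    hcont.eventually (gt_mem_nhds (by simpa using hβ))
  exact ((hsmall.filter_mono nhdsWithin_le_nhds).and (Ioo_mem_nhdsGT one_pos)).exists

theorem ENNReal.rpow_neg_le_add_tsum {a q : ℝ≥0∞} (ha0 : a ≠ 0) (ha : a ≠ ⊤) (hq0 : q ≠ 0)
    (hq1 : q < 1) {t : ℝ} (ht : 0 ≤ t) (δ : ℝ≥0∞) :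
    δ ^ (-t) ≤ a ^ (-t) + ∑' k : ℕ, if δ < q ^ k * a then (q ^ (k + 1) * a) ^ (-t) else 0 := by
  have hanti : ∀ {x y : ℝ≥0∞}, x ≤ y → y ^ (-t) ≤ x ^ (-t) := fun hxy => by
    rw [ENNReal.rpow_neg, ENNReal.rpow_neg]
    exact ENNReal.inv_le_inv.2 (ENNReal.rpow_le_rpow hxy ht)
  rcases le_or_gt a δ with haδ | hδa
  · exact (hanti haδ).trans le_self_add
  rcases eq_or_ne δ 0 with rfl | hδ0
  · -- `0` lies in every layer, and each layer contributes at least `a ^ (-t) ≠ 0`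
    suffices h : ∑' k : ℕ, (if 0 < q ^ k * a then (q ^ (k + 1) * a) ^ (-t) else 0) = ⊤ by
      rw [h, add_top]
      exact le_top
    have hconst : ∑' _ : ℕ, a ^ (-t) = ⊤ :=
      ENNReal.tsum_const_eq_top_of_ne_zero (ENNReal.rpow_pos (pos_iff_ne_zero.2 ha0) ha).ne'
    refine top_le_iff.1 <| hconst.ge.trans <| ENNReal.tsum_le_tsum fun k => ?_
    rw [if_pos (by positivity)]
    exact hanti (mul_le_of_le_one_left' (pow_le_one₀ (zero_le (α := ℝ≥0∞)) hq1.le))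
  classical
  have hsmall : ∃ k, q ^ k * a ≤ δ := by
    have hlim : Tendsto (fun k => q ^ k * a) atTop (𝓝 0) := by
      simpa using ENNReal.Tendsto.mul_const
        (ENNReal.tendsto_pow_atTop_nhds_zero_of_lt_one hq1) (Or.inr ha)
    exact ((hlim.eventually (gt_mem_nhds (pos_iff_ne_zero.2 hδ0))).exists).imp fun _ => le_of_lt
  obtain ⟨k, hk⟩ : ∃ k, Nat.find hsmall = k + 1 :=
    Nat.exists_eq_succ_of_ne_zero fun h => by simpa [h] using (Nat.find_spec hsmall).trans_lt hδa
  have hlow : q ^ (k + 1) * a ≤ δ := hk ▸ Nat.find_spec hsmall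
  have hup : δ < q ^ k * a := not_le.1 (Nat.find_min hsmall (by omega))
  calc δ ^ (-t) ≤ (q ^ (k + 1) * a) ^ (-t) := hanti hlow
    _ ≤ ∑' k : ℕ, if δ < q ^ k * a then (q ^ (k + 1) * a) ^ (-t) else 0 :=
        le_of_eq_of_le (if_pos hup).symm (ENNReal.le_tsum k)
    _ ≤ _ := le_add_self

theorem setLIntegral_rpow_neg_le_of_measure_lt_le {α : Type*} [MeasurableSpace α] {μ : Measure α}
    {f : α → ℝ≥0∞} (hf : Measurable f) (s : Set α) {a q β M : ℝ≥0∞} (ha0 : a ≠ 0) (ha : a ≠ ⊤)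
    (hq0 : q ≠ 0) (hq1 : q < 1) {t : ℝ} (ht : 0 ≤ t)
    (hdecay : ∀ k : ℕ, μ (s ∩ {y | f y < q ^ k * a}) ≤ β ^ k * M) :
    ∫⁻ y in s, f y ^ (-t) ∂μ ≤ a ^ (-t) * (μ s + q ^ (-t) * M * (1 - β * q ^ (-t))⁻¹) := by
  have hlayer : ∀ k : ℕ, MeasurableSet {y | f y < q ^ k * a} := fun k =>
    measurableSet_lt hf measurable_const
  have hterm : ∀ k : ℕ, (q ^ (k + 1) * a) ^ (-t) * (β ^ k * M) =
      a ^ (-t) * (q ^ (-t) * M * (β * q ^ (-t)) ^ k) := fun k => by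
    rw [ENNReal.mul_rpow_of_ne_zero (pow_ne_zero _ hq0) ha0, ← ENNReal.rpow_natCast_mul,
      mul_comm _ (-t), ENNReal.rpow_mul_natCast, mul_pow]
    ring
  calc ∫⁻ y in s, f y ^ (-t) ∂μ
      ≤ ∫⁻ y in s, a ^ (-t) + ∑' k : ℕ,
          {y | f y < q ^ k * a}.indicator (fun _ => (q ^ (k + 1) * a) ^ (-t)) y ∂μ :=
        lintegral_mono fun y => by
          simpa only [indicator_apply, mem_ofPred_eq]
            using ENNReal.rpow_neg_le_add_tsum ha0 ha hq0 hq1 ht (f y)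
    _ = a ^ (-t) * μ s + ∑' k : ℕ, (q ^ (k + 1) * a) ^ (-t) * μ (s ∩ {y | f y < q ^ k * a}) := by
        rw [lintegral_add_left measurable_const, setLIntegral_const,
          lintegral_tsum fun k => (measurable_const.indicator (hlayer k)).aemeasurable]
        congr 1
        refine tsum_congr fun k => ?_
        rw [lintegral_indicator_const (hlayer k), Measure.restrict_apply (hlayer k), inter_comm]
    _ ≤ a ^ (-t) * μ s + ∑' k : ℕ, (q ^ (k + 1) * a) ^ (-t) * (β ^ k * M) := by
        gcongr with k
        exact hdecay k
    _ = a ^ (-t) * (μ s + q ^ (-t) * M * (1 - β * q ^ (-t))⁻¹) := by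
        simp_rw [hterm, ENNReal.tsum_mul_left, ENNReal.tsum_geometric, mul_add]

theorem setLIntegral_measure_inter_ball_comm {X : Type*} [PseudoMetricSpace X] [MeasurableSpace X]
    [OpensMeasurableSpace X] [SecondCountableTopology X] (μ : Measure X) [SFinite μ] {A D : Set X}
    (hA : MeasurableSet A) (hD : MeasurableSet D) (r : ℝ) :
    ∫⁻ y in A, μ (D ∩ ball y r) ∂μ = ∫⁻ u in D, μ (A ∩ ball u r) ∂μ := by
  set S : Set (X × X) := A ×ˢ D ∩ {p | dist p.1 p.2 < r}
  have hS : MeasurableSet S :=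
    (hA.prod hD).inter (measurableSet_lt measurable_dist measurable_const)
  have hfst : (μ.prod μ) S = ∫⁻ y in A, μ (D ∩ ball y r) ∂μ := by
    rw [Measure.prod_apply hS, ← lintegral_indicator hA]
    refine lintegral_congr fun y => ?_
    by_cases hy : y ∈ A <;> simp [S, hy, preimage, inter_def, dist_comm]
  have hsnd : (μ.prod μ) S = ∫⁻ u in D, μ (A ∩ ball u r) ∂μ := by
    rw [Measure.prod_apply_symm hS, ← lintegral_indicator hD]
    refine lintegral_congr fun u => ?_
    by_cases hu : u ∈ D <;> simp [S, hu, preimage, inter_def]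
  rw [← hfst, hsnd]

theorem measure_mul_le_measure_mul_of_le_measure_inter_ball {X : Type*} [PseudoMetricSpace X]
    [MeasurableSpace X] [OpensMeasurableSpace X] [SecondCountableTopology X] (μ : Measure X)
    [SFinite μ] {A D : Set X} (hA : MeasurableSet A) (hD : MeasurableSet D) {r : ℝ} {m M : ℝ≥0∞}
    (hm : ∀ y ∈ A, m ≤ μ (D ∩ ball y r)) (hM : ∀ u ∈ D, μ (A ∩ ball u r) ≤ M) :
    μ A * m ≤ μ D * M := by
  calc μ A * m = ∫⁻ _ in A, m ∂μ := by rw [setLIntegral_const, mul_comm]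
    _ ≤ ∫⁻ y in A, μ (D ∩ ball y r) ∂μ := setLIntegral_mono' hA hm
    _ = ∫⁻ u in D, μ (A ∩ ball u r) ∂μ := setLIntegral_measure_inter_ball_comm μ hA hD r
    _ ≤ ∫⁻ _ in D, M ∂μ := setLIntegral_mono' hD hM
    _ = μ D * M := by rw [setLIntegral_const, mul_comm]

def IsPorous {X : Type*} [PseudoMetricSpace X] (κ : ℝ) (E : Set X) : Prop :=
  ∀ x ∈ E, ∀ r : ℝ, 0 < r → r ≤ 1 → ∃ y ∈ ball x r, ball y (κ * r) ∩ E = ∅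

namespace IsPorous

variable {X : Type*} [PseudoMetricSpace X] {κ : ℝ} {E : Set X}

theorem exists_ball_subset_ball_diff_thickening (hE : IsPorous κ E) (hκ : κ ≤ 1) {z : X}
    (hz : z ∈ E) {ρ : ℝ} (hρ0 : 0 < ρ) (hρ1 : ρ ≤ 1) :
    ∃ w, ball w (κ * ρ / 2) ⊆ ball z (2 * ρ) \ thickening (κ * ρ / 2) E := by
  obtain ⟨w, hwz, hhole⟩ := hE z hz ρ hρ0 hρ1
  refine ⟨w, fun u hu => ⟨?_, ?_⟩⟩
  · have : κ * ρ ≤ ρ := mul_le_of_le_one_left hρ0.le hκ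
    calc dist u z ≤ dist u w + dist w z := dist_triangle u w z
      _ < κ * ρ / 2 + ρ := add_lt_add (mem_ball.1 hu) (mem_ball.1 hwz)
      _ ≤ 2 * ρ := by linarith
  · intro hu'
    obtain ⟨e, he, hue⟩ := mem_thickening_iff.1 hu'
    refine (eq_empty_iff_forall_notMem.1 hhole) e ⟨?_, he⟩
    calc dist e w ≤ dist e u + dist u w := dist_triangle e u w
      _ < κ * ρ / 2 + κ * ρ / 2 := by rw [dist_comm] at hue; exact add_lt_add hue (mem_ball.1 hu)
      _ = κ * ρ := by ring

section AddHaar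

variable {V : Type*} [NormedAddCommGroup V] [NormedSpace ℝ V] [FiniteDimensional ℝ V]
  [MeasurableSpace V] [BorelSpace V] (μ : Measure V) [μ.IsAddHaarMeasure] {E : Set V}

theorem measure_thickening_inter_ball_mul_le_measure_sdiff (hE : IsPorous κ E) (hκ0 : 0 < κ)
    (hκ1 : κ ≤ 1) {ρ ε : ℝ} (hρ0 : 0 < ρ) (hρ1 : ρ ≤ 1) (hε : ε ≤ κ * ρ / 2) (x : V) (R : ℝ) :
    μ (thickening ε E ∩ ball x R) * ENNReal.ofReal ((κ / 6) ^ finrank ℝ V) ≤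
      μ ((thickening (2 * ρ) E ∩ ball x (R + 3 * ρ)) \ thickening ε E) := by
  have hερ : ε ≤ ρ / 2 := hε.trans (by nlinarith)
  have hcount : μ (thickening ε E ∩ ball x R) * μ (ball (0 : V) (κ * ρ / 2)) ≤
      μ ((thickening (2 * ρ) E ∩ ball x (R + 3 * ρ)) \ thickening ε E) *
        μ (ball (0 : V) (3 * ρ)) := by
    refine measure_mul_le_measure_mul_of_le_measure_inter_ball μ
      (isOpen_thickening.inter isOpen_ball).measurableSet
      ((isOpen_thickening.inter isOpen_ball).measurableSet.diff isOpen_thickening.measurableSet)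
      (fun y hy => ?_) (fun u _ => (measure_mono inter_subset_right).trans
        (Measure.addHaar_ball_center μ u _).le)
    obtain ⟨z, hz, hyz⟩ := mem_thickening_iff.1 hy.1
    obtain ⟨w, hw⟩ := hE.exists_ball_subset_ball_diff_thickening hκ1 hz hρ0 hρ1
    rw [← Measure.addHaar_ball_center μ w]
    refine measure_mono fun u hu => ?_
    obtain ⟨huz, hu_thick⟩ := hw hu
    have huy : dist u y < 3 * ρ := by
      calc dist u y ≤ dist u z + dist z y := dist_triangle u z y
        _ < 2 * ρ + ε := add_lt_add (mem_ball.1 huz) (by rwa [dist_comm])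
        _ ≤ 3 * ρ := by linarith
    refine ⟨⟨⟨mem_thickening_iff.2 ⟨z, hz, mem_ball.1 huz⟩, ?_⟩,
      fun h => hu_thick (thickening_mono hε E h)⟩, huy⟩
    calc dist u x ≤ dist u y + dist y x := dist_triangle u y x
      _ < 3 * ρ + R := add_lt_add huy hy.2
      _ = R + 3 * ρ := add_comm _ _
  have hratio : μ (ball (0 : V) (κ * ρ / 2)) =
      ENNReal.ofReal ((κ / 6) ^ finrank ℝ V) * μ (ball (0 : V) (3 * ρ)) := by
    rw [← Measure.addHaar_ball_mul_of_pos μ 0 (by positivity : 0 < κ / 6)]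
    ring_nf
  rwa [hratio, ← mul_assoc, ENNReal.mul_le_mul_iff_left (measure_ball_pos μ _ (by positivity)).ne'
    measure_ball_lt_top.ne] at hcount

theorem measure_thickening_inter_ball_mul_le (hE : IsPorous κ E) (hκ0 : 0 < κ) (hκ1 : κ ≤ 1)
    {ρ ε : ℝ} (hρ0 : 0 < ρ) (hρ1 : ρ ≤ 1) (hε : ε ≤ κ * ρ / 2) (x : V) (R : ℝ) :
    μ (thickening ε E ∩ ball x R) * (1 + ENNReal.ofReal ((κ / 6) ^ finrank ℝ V)) ≤
      μ (thickening (2 * ρ) E ∩ ball x (R + 3 * ρ)) := by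
  set A := thickening ε E ∩ ball x R
  set D := (thickening (2 * ρ) E ∩ ball x (R + 3 * ρ)) \ thickening ε E
  have hερ : ε ≤ 2 * ρ := hε.trans (by nlinarith)
  have hDmeas : MeasurableSet D :=
    (isOpen_thickening.inter isOpen_ball).measurableSet.diff isOpen_thickening.measurableSet
  have hAD : Disjoint A D := disjoint_sdiff_right.mono_left inter_subset_left
  have hsub : A ∪ D ⊆ thickening (2 * ρ) E ∩ ball x (R + 3 * ρ) :=
    union_subset (inter_subset_inter (thickening_mono hερ E)
      (ball_subset_ball (by linarith))) sdiff_subset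
  calc μ A * (1 + ENNReal.ofReal ((κ / 6) ^ finrank ℝ V))
      = μ A + μ A * ENNReal.ofReal ((κ / 6) ^ finrank ℝ V) := by ring
    _ ≤ μ A + μ D := add_le_add_right
        (hE.measure_thickening_inter_ball_mul_le_measure_sdiff μ hκ0 hκ1 hρ0 hρ1 hε x R) _
    _ = μ (A ∪ D) := (measure_union hAD hDmeas).symm
    _ ≤ _ := measure_mono hsub

theorem measure_thickening_inter_ball_le (hE : IsPorous κ E) (hκ0 : 0 < κ) (hκ1 : κ ≤ 1) (x : V)
    {r : ℝ} (hr0 : 0 < r) (hr2 : r ≤ 2) (k : ℕ) :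
    μ (thickening ((κ / 4) ^ k * r) E ∩ ball x r) ≤
      ENNReal.ofReal (1 + (κ / 6) ^ finrank ℝ V)⁻¹ ^ k * μ (ball x (4 * r)) := by
  set θ := κ / 4
  have hθ0 : 0 < θ := by positivity
  have hθ1 : θ ≤ 1 / 4 := by simp only [θ]; linarith
  have hβ : ENNReal.ofReal (1 + (κ / 6) ^ finrank ℝ V)⁻¹ =
      (1 + ENNReal.ofReal ((κ / 6) ^ finrank ℝ V))⁻¹ := by
    rw [ENNReal.ofReal_inv_of_pos (by positivity), ENNReal.ofReal_add zero_le_one (by positivity),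
      ENNReal.ofReal_one]
  -- the radii `r + 3 θ ^ j r` absorb the enlargement by `3ρ` made in each step
  have hscale : ∀ j : ℕ, μ (thickening (θ ^ j * r) E ∩ ball x (r + 3 * (θ ^ j * r))) ≤
      ENNReal.ofReal (1 + (κ / 6) ^ finrank ℝ V)⁻¹ ^ j * μ (ball x (4 * r)) := by
    intro j
    induction j with
    | zero =>
      refine (measure_mono inter_subset_right).trans_eq ?_
      rw [pow_zero, pow_zero, one_mul]
      ring_nf
    | succ j ih =>
      have hθj : 0 < θ ^ j * r := by positivity
      have hθj1 : θ ^ j * r ≤ 2 :=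
        (mul_le_of_le_one_left hr0.le (pow_le_one₀ hθ0.le (by linarith))).trans hr2
      have hnext : θ ^ (j + 1) * r ≤ θ ^ j * r / 2 := by
        rw [pow_succ, mul_right_comm]; nlinarith [mul_le_mul_of_nonneg_left hθ1 hθj.le]
      have hstep := hE.measure_thickening_inter_ball_mul_le μ hκ0 hκ1 (half_pos hθj) (by linarith)
        (le_of_eq (by rw [pow_succ]; ring) : θ ^ (j + 1) * r ≤ κ * (θ ^ j * r / 2) / 2) x
        (r + 3 * (θ ^ (j + 1) * r))
      have hmono : μ (thickening (2 * (θ ^ j * r / 2)) E ∩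
          ball x (r + 3 * (θ ^ (j + 1) * r) + 3 * (θ ^ j * r / 2))) ≤
          μ (thickening (θ ^ j * r) E ∩ ball x (r + 3 * (θ ^ j * r))) :=
        measure_mono (inter_subset_inter (thickening_mono (by linarith) E)
          (ball_subset_ball (by linarith)))
      calc _ ≤ μ (thickening (θ ^ j * r) E ∩ ball x (r + 3 * (θ ^ j * r))) /
            (1 + ENNReal.ofReal ((κ / 6) ^ finrank ℝ V)) :=
          (ENNReal.le_div_iff_mul_le (.inl (by positivity)) (.inl (by finiteness))).2
            (hstep.trans hmono)
        _ ≤ ENNReal.ofReal (1 + (κ / 6) ^ finrank ℝ V)⁻¹ ^ j * μ (ball x (4 * r)) *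
            ENNReal.ofReal (1 + (κ / 6) ^ finrank ℝ V)⁻¹ := by
          rw [div_eq_mul_inv, ← hβ]
          gcongr
        _ = _ := by ring
  refine (measure_mono (inter_subset_inter_right _ (ball_subset_ball ?_))).trans (hscale k)
  exact le_add_of_nonneg_right (by positivity)

theorem exists_setLIntegral_infEDist_rpow_neg_le (hE : IsPorous κ E) (hκ0 : 0 < κ)
    (hκ1 : κ ≤ 1) :
    ∃ t : ℝ, 0 < t ∧ t < 1 ∧ ∃ C : ℝ≥0∞, C ≠ ⊤ ∧ ∀ x : V, ∀ r : ℝ, 0 < r → r ≤ 2 →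
      ∫⁻ y in ball x r, infEDist y E ^ (-t) ∂μ ≤
        C * ENNReal.ofReal r ^ ((finrank ℝ V : ℝ) - t) := by
  set n := finrank ℝ V
  set θ := κ / 4
  set β := (1 + (κ / 6) ^ n)⁻¹
  have hθ0 : 0 < θ := by positivity
  have hθ1 : θ < 1 := by simp only [θ]; linarith
  have hβ1 : β < 1 := inv_lt_one_of_one_lt₀ (lt_add_of_pos_right 1 (by positivity))
  -- for small `t` the layer measures `β ^ k` beat the growth `θ ^ (-t k)` of the integrand
  obtain ⟨t, hβθ, ht0, ht1⟩ := Real.exists_mul_rpow_neg_lt_one hβ1 hθ0.ne'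
  have hβθ' : ENNReal.ofReal β * ENNReal.ofReal θ ^ (-t) < 1 := by
    rw [ENNReal.ofReal_rpow_of_pos hθ0, ← ENNReal.ofReal_mul (by positivity)]
    exact ENNReal.ofReal_lt_one.2 hβθ
  refine ⟨t, ht0, ht1, μ (ball 0 1) * (1 + ENNReal.ofReal θ ^ (-t) * ENNReal.ofReal (4 ^ n) *
    (1 - ENNReal.ofReal β * ENNReal.ofReal θ ^ (-t))⁻¹), ?_, fun x r hr0 hr2 => ?_⟩
  · have hθt : ENNReal.ofReal θ ^ (-t) ≠ ⊤ := by
      simp [ENNReal.rpow_eq_top_iff, hθ0, ht0]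
    have hgeom : (1 - ENNReal.ofReal β * ENNReal.ofReal θ ^ (-t))⁻¹ ≠ ⊤ :=
      ENNReal.inv_ne_top.2 (tsub_pos_of_lt hβθ').ne'
    exact ENNReal.mul_ne_top measure_ball_lt_top.ne (by finiteness)
  have hr : ENNReal.ofReal r ≠ 0 := (ENNReal.ofReal_pos.2 hr0).ne'
  calc ∫⁻ y in ball x r, infEDist y E ^ (-t) ∂μ
      ≤ ENNReal.ofReal r ^ (-t) * (μ (ball x r) + ENNReal.ofReal θ ^ (-t) * μ (ball x (4 * r)) *
          (1 - ENNReal.ofReal β * ENNReal.ofReal θ ^ (-t))⁻¹) := by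
        refine setLIntegral_rpow_neg_le_of_measure_lt_le continuous_infEDist.measurable _
          hr ENNReal.ofReal_ne_top (ENNReal.ofReal_pos.2 hθ0).ne' (ENNReal.ofReal_lt_one.2 hθ1)
          ht0.le fun k => ?_
        rw [← ENNReal.ofReal_pow hθ0.le, ← ENNReal.ofReal_mul (by positivity), inter_comm]
        exact hE.measure_thickening_inter_ball_le μ hκ0 hκ1 x hr0 hr2 k
    _ = _ := by
        rw [Measure.addHaar_ball_of_pos μ x hr0, Measure.addHaar_ball_of_pos μ x (by positivity),
          mul_pow, ENNReal.ofReal_mul (by positivity), ENNReal.ofReal_pow hr0.le,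
          sub_eq_add_neg, ENNReal.rpow_add _ _ hr ENNReal.ofReal_ne_top, ENNReal.rpow_natCast]
        ring

end AddHaar

end IsPorous

theorem porous_boundary_implies_Dt_general (d : ℕ) (O : Set (EuclideanSpace ℝ (Fin d)))
    (κ : ℝ) (hκ0 : 0 < κ) (hκ1 : κ ≤ 1)
    (hpor : ∀ x ∈ frontier O, ∀ r : ℝ, 0 < r → r ≤ 1 →
      ∃ y ∈ ball x r, ball y (κ * r) ∩ frontier O = ∅) :
    ∃ t : ℝ, 0 < t ∧ t < 1 ∧ ∃ K : ℝ, 0 ≤ K ∧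
      ∀ x ∈ frontier O, ∀ r : ℝ, 0 < r → r ≤ 1 →
        ∫⁻ y in ball x r \ frontier O, EMetric.infEdist y (frontier O) ^ (-t) ≤
          ENNReal.ofReal (K * r ^ ((d : ℝ) - t)) := by
  obtain ⟨t, ht0, ht1, C, hC, hbound⟩ :=
    IsPorous.exists_setLIntegral_infEDist_rpow_neg_le volume hpor hκ0 hκ1
  refine ⟨t, ht0, ht1, C.toReal, ENNReal.toReal_nonneg, fun x _ r hr0 hr1 => ?_⟩
  calc _ ≤ ∫⁻ y in ball x r, infEDist y (frontier O) ^ (-t) := lintegral_mono_set sdiff_subset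
    _ ≤ C * ENNReal.ofReal r ^ ((d : ℝ) - t) := by
        simpa only [finrank_euclideanSpace_fin] using hbound x r hr0 (by linarith)
    _ = ENNReal.ofReal (C.toReal * r ^ ((d : ℝ) - t)) := by
        rw [ENNReal.ofReal_mul ENNReal.toReal_nonneg, ENNReal.ofReal_toReal hC,
          ENNReal.ofReal_rpow_of_pos hr0]

/-- An open set with porous boundary belongs to the class `D^t` for some `t ∈ (0,1)`:
the quantity `r^(t-d) ∫_{B(x,r) \ ∂O} dist(y,∂O)^(-t) dy` is uniformly bounded over
`x ∈ ∂O` and `0 < r ≤ 1`. -/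
theorem porous_boundary_implies_Dt (d : ℕ) (O : Set (EuclideanSpace ℝ (Fin d)))
    (hO : IsOpen O) (κ : ℝ) (hκ0 : 0 < κ) (hκ1 : κ ≤ 1)
    (hpor : ∀ x ∈ frontier O, ∀ r : ℝ, 0 < r → r ≤ 1 →
      ∃ y ∈ ball x r, ball y (κ * r) ∩ frontier O = ∅) :
    ∃ t : ℝ, 0 < t ∧ t < 1 ∧ ∃ K : ℝ, 0 ≤ K ∧
      ∀ x ∈ frontier O, ∀ r : ℝ, 0 < r → r ≤ 1 →
        ∫⁻ y in ball x r \ frontier O, EMetric.infEdist y (frontier O) ^ (-t) ≤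
          ENNReal.ofReal (K * r ^ ((d : ℝ) - t)) :=
  porous_boundary_implies_Dt_general d O κ hκ0 hκ1 hpor
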